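/- Let 0 < ε ≤ 1/2 and σ ≥ 0. Let D and W be Borel probability measures on ℝ^d with finite second moments, means μ_D and μ_W, and suppose that for every unit vector u one has E_{X∼D}[⟨X−μ_D,u⟩²] ≤ σ² and E_{X∼W}[⟨X−μ_W,u⟩²] ≤ σ². Let Δ = μ_D − μ_W, let Σ_F be the covariance matrix of the mixture F = (1−ε)D + εW, and let v be a unit vector attaining vᵀΣ_F v = max_{‖u‖₂=1} uᵀΣ_F u. If σ² ≤ (ε/6)·‖Δ‖₂², then ⟨v,Δ⟩² ≥ (1 − 1/(6(1−ε)))·‖Δ‖₂² ≥ (2/3)·‖Δ‖₂². -/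

import Mathlib

/-!
Along a direction `u`, the quadratic form of `Σ_F` is the `F`-variance of `⟪x, u⟫`, and the law of
total variance splits it as `(1 - ε) Var_D + ε Var_W + ε (1 - ε) ⟪Δ, u⟫²`. Comparing the maximizer
`v` with the direction `Δ / ‖Δ‖` gives `ε (1 - ε) ‖Δ‖² ≤ σ² + ε (1 - ε) ⟪v, Δ⟫²`, and the
separation `σ² ≤ (ε / 6) ‖Δ‖²` turns this into the bound.
-/

open MeasureTheory RealInnerProductSpace

namespace MeasureTheory

variable {α : Type*} [MeasurableSpace α] {μ ν : Measure α}

theorem MemLp.add_measure {E : Type*} [NormedAddCommGroup E] {f : α → E}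
    (hμ : MemLp f 2 μ) (hν : MemLp f 2 ν) : MemLp f 2 (μ + ν) :=
  (memLp_two_iff_integrable_sq_norm (hμ.1.add_measure hν.1)).2
    (((memLp_two_iff_integrable_sq_norm hμ.1).1 hμ).add_measure
      ((memLp_two_iff_integrable_sq_norm hν.1).1 hν))

theorem integral_ofReal_smul_add_ofReal_smul {G : Type*} [NormedAddCommGroup G]
    [NormedSpace ℝ G] {f : α → G} {a b : ℝ} (ha : 0 ≤ a) (hb : 0 ≤ b)
    (hμ : Integrable f μ) (hν : Integrable f ν) :
    ∫ x, f x ∂(ENNReal.ofReal a • μ + ENNReal.ofReal b • ν) =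
      a • ∫ x, f x ∂μ + b • ∫ x, f x ∂ν := by
  rw [integral_add_measure (hμ.smul_measure ENNReal.ofReal_ne_top)
    (hν.smul_measure ENNReal.ofReal_ne_top), integral_smul_measure, integral_smul_measure,
    ENNReal.toReal_ofReal ha, ENNReal.toReal_ofReal hb]

end MeasureTheory

namespace ProbabilityTheory

variable {Ω : Type*} [MeasurableSpace Ω] {μ : Measure Ω} [IsProbabilityMeasure μ]

theorem integral_sub_const_sq {X : Ω → ℝ} (hX : MemLp X 2 μ) (a : ℝ) :
    ∫ ω, (X ω - a) ^ 2 ∂μ = ∫ ω, (X ω - μ[X]) ^ 2 ∂μ + (μ[X] - a) ^ 2 := by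
  have hXa : MemLp (fun ω => X ω - a) 2 μ := hX.sub (memLp_const a)
  have hvar := variance_eq_sub hXa
  rw [variance_sub_const hX.1, variance_eq_integral hX.aemeasurable,
    integral_sub (hX.integrable one_le_two) (integrable_const a)] at hvar
  simp only [Pi.pow_apply, integral_const, probReal_univ, smul_eq_mul, one_mul] at hvar
  linarith

end ProbabilityTheory

section InnerProductSpace

variable {E : Type*} [NormedAddCommGroup E] [InnerProductSpace ℝ E] [MeasurableSpace E]
  {μ : Measure E}

theorem MeasureTheory.MemLp.inner_sub_const [IsFiniteMeasure μ] (h : MemLp id 2 μ) (a u : E) :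
    MemLp (fun x => ⟪x - a, u⟫) 2 μ :=
  (h.sub (memLp_const a)).inner_const u

variable [CompleteSpace E]

theorem integral_inner_sub_sq [IsProbabilityMeasure μ] (h : MemLp id 2 μ) (a u : E) :
    ∫ x, ⟪x - a, u⟫ ^ 2 ∂μ = ∫ x, ⟪x - ∫ y, y ∂μ, u⟫ ^ 2 ∂μ + ⟪(∫ y, y ∂μ) - a, u⟫ ^ 2 := by
  have hu : MemLp (fun x => ⟪x, u⟫) 2 μ := h.inner_const u
  have hmean : ∫ x, ⟪x, u⟫ ∂μ = ⟪∫ y, y ∂μ, u⟫ := by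
    simp_rw [real_inner_comm u]
    exact integral_inner (h.integrable one_le_two) u
  simp only [inner_sub_left]
  rw [ProbabilityTheory.integral_sub_const_sq hu, hmean]

end InnerProductSpace

section Mixture

variable {E : Type*} [NormedAddCommGroup E] [InnerProductSpace ℝ E] [CompleteSpace E]
  [MeasurableSpace E] {D W : Measure E} [IsProbabilityMeasure D] [IsProbabilityMeasure W]

theorem integral_inner_sub_sq_mixture (hD : MemLp id 2 D) (hW : MemLp id 2 W)
    {mD mW : E} (hmD : mD = ∫ x, x ∂D) (hmW : mW = ∫ x, x ∂W) {t : ℝ} (ht0 : 0 ≤ t)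
    (ht1 : t ≤ 1) (u : E) :
    ∫ x, ⟪x - ((1 - t) • mD + t • mW), u⟫ ^ 2
        ∂(ENNReal.ofReal (1 - t) • D + ENNReal.ofReal t • W) =
      (1 - t) * ∫ x, ⟪x - mD, u⟫ ^ 2 ∂D + t * ∫ x, ⟪x - mW, u⟫ ^ 2 ∂W +
        t * (1 - t) * ⟪mD - mW, u⟫ ^ 2 := by
  set m := (1 - t) • mD + t • mW
  have hDm : mD - m = t • (mD - mW) := by module
  have hWm : mW - m = -((1 - t) • (mD - mW)) := by module
  rw [integral_ofReal_smul_add_ofReal_smul (sub_nonneg.2 ht1) ht0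
      ((hD.inner_sub_const m u).integrable_sq) ((hW.inner_sub_const m u).integrable_sq),
    integral_inner_sub_sq hD, integral_inner_sub_sq hW, ← hmD, ← hmW, hDm, hWm,
    inner_neg_left, real_inner_smul_left, real_inner_smul_left, smul_eq_mul, smul_eq_mul]
  ring

end Mixture

noncomputable def centeredMomentMatrix {ι : Type*} (μ : Measure (EuclideanSpace ℝ ι))
    (c : EuclideanSpace ℝ ι) : Matrix ι ι ℝ :=
  Matrix.of fun i j => ∫ x, (x i - c i) * (x j - c j) ∂μ

theorem sum_mul_centeredMomentMatrix_mul {ι : Type*} [Fintype ι]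
    {μ : Measure (EuclideanSpace ℝ ι)} [IsFiniteMeasure μ] (h : MemLp id 2 μ)
    (c u : EuclideanSpace ℝ ι) :
    ∑ i, ∑ j, u i * centeredMomentMatrix μ c i j * u j = ∫ x, ⟪x - c, u⟫ ^ 2 ∂μ := by
  have hcoord : ∀ i, MemLp (fun x : EuclideanSpace ℝ ι => x i - c i) 2 μ := fun i =>
    ((EuclideanSpace.proj (𝕜 := ℝ) i).comp_memLp' h).sub (memLp_const (c i))
  have hint : ∀ i j, Integrable
      (fun x : EuclideanSpace ℝ ι => u i * ((x i - c i) * (x j - c j)) * u j) μ := fun i j =>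
    (((hcoord i).integrable_mul (hcoord j)).const_mul (u i)).mul_const (u j)
  have hexpand : ∀ x : EuclideanSpace ℝ ι,
      ⟪x - c, u⟫ ^ 2 = ∑ i, ∑ j, u i * ((x i - c i) * (x j - c j)) * u j := by
    intro x
    simp only [PiLp.inner_apply, PiLp.sub_apply, RCLike.inner_apply, conj_trivial, sq,
      Finset.sum_mul_sum]
    refine Finset.sum_congr rfl fun i _ => Finset.sum_congr rfl fun j _ => ?_
    ring
  simp_rw [hexpand]
  rw [integral_finsetSum _ fun i _ => integrable_finsetSum _ fun j _ => hint i j]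
  refine Finset.sum_congr rfl fun i _ => ?_
  rw [integral_finsetSum _ fun j _ => hint i j]
  refine Finset.sum_congr rfl fun j _ => ?_
  rw [integral_mul_const, integral_const_mul]
  rfl

theorem top_eigenvector_captures_delta_general {d : ℕ} (ε σ : ℝ)
    (hε0 : 0 < ε) (hε1 : ε ≤ 1 / 2)
    (D W : Measure (EuclideanSpace ℝ (Fin d)))
    [IsProbabilityMeasure D] [IsProbabilityMeasure W]
    (hD2 : MemLp (id : EuclideanSpace ℝ (Fin d) → EuclideanSpace ℝ (Fin d)) 2 D)
    (hW2 : MemLp (id : EuclideanSpace ℝ (Fin d) → EuclideanSpace ℝ (Fin d)) 2 W)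
    (μD μW : EuclideanSpace ℝ (Fin d))
    (hμD : μD = (∫ x, x ∂D)) (hμW : μW = (∫ x, x ∂W))
    (hDcov : ∀ u : EuclideanSpace ℝ (Fin d), ‖u‖ = 1 →
      ∫ x, ⟪x - μD, u⟫ ^ 2 ∂D ≤ σ ^ 2)
    (hWcov : ∀ u : EuclideanSpace ℝ (Fin d), ‖u‖ = 1 →
      ∫ x, ⟪x - μW, u⟫ ^ 2 ∂W ≤ σ ^ 2)
    (Δ : EuclideanSpace ℝ (Fin d)) (hΔ : Δ = μD - μW)
    (F : Measure (EuclideanSpace ℝ (Fin d)))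
    (hF : F = ENNReal.ofReal (1 - ε) • D + ENNReal.ofReal ε • W)
    (μF : EuclideanSpace ℝ (Fin d)) (hμF : μF = (1 - ε) • μD + ε • μW)
    (SigmaF : Matrix (Fin d) (Fin d) ℝ)
    (hSigmaF : SigmaF = Matrix.of fun i j => ∫ x, (x i - μF i) * (x j - μF j) ∂F)
    (v : EuclideanSpace ℝ (Fin d)) (hv : ‖v‖ = 1)
    (hvmax : ∀ u : EuclideanSpace ℝ (Fin d), ‖u‖ = 1 →
      ∑ i, ∑ j, u i * SigmaF i j * u j ≤ ∑ i, ∑ j, v i * SigmaF i j * v j)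
    (hsep : σ ^ 2 ≤ ε / 6 * ‖Δ‖ ^ 2) :
    (1 - 1 / (6 * (1 - ε))) * ‖Δ‖ ^ 2 ≤ ⟪v, Δ⟫ ^ 2 ∧
    2 / 3 * ‖Δ‖ ^ 2 ≤ (1 - 1 / (6 * (1 - ε))) * ‖Δ‖ ^ 2 := by
  have hε_le_one : ε ≤ 1 := by linarith
  have : IsFiniteMeasure F := by
    have := D.smul_finite (ENNReal.ofReal_ne_top (r := 1 - ε))
    have := W.smul_finite (ENNReal.ofReal_ne_top (r := ε))
    rw [hF]; infer_instance
  have hF2 : MemLp id 2 F := hF ▸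
    (hD2.smul_measure ENNReal.ofReal_ne_top).add_measure (hW2.smul_measure ENNReal.ofReal_ne_top)
  have hQ (u : EuclideanSpace ℝ (Fin d)) : ∑ i, ∑ j, u i * SigmaF i j * u j =
      (1 - ε) * ∫ x, ⟪x - μD, u⟫ ^ 2 ∂D + ε * ∫ x, ⟪x - μW, u⟫ ^ 2 ∂W +
        ε * (1 - ε) * ⟪Δ, u⟫ ^ 2 := by
    rw [hSigmaF, hΔ, ← integral_inner_sub_sq_mixture hD2 hW2 hμD hμW hε0.le hε_le_one u,
      ← hμF, ← hF]
    exact sum_mul_centeredMomentMatrix_mul hF2 μF u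
  have hcaptured : (1 - 1 / (6 * (1 - ε))) * ‖Δ‖ ^ 2 ≤ ⟪v, Δ⟫ ^ 2 := by
    rcases eq_or_ne Δ 0 with rfl | hΔ0
    · simp
    obtain ⟨u, hu, huΔ⟩ : ∃ u : EuclideanSpace ℝ (Fin d), ‖u‖ = 1 ∧ ⟪Δ, u⟫ = ‖Δ‖ :=
      ⟨‖Δ‖⁻¹ • Δ, norm_smul_inv_norm hΔ0, by
        rw [real_inner_smul_right, real_inner_self_eq_norm_sq]; field_simp⟩
    have hvarD : 0 ≤ ∫ x, ⟪x - μD, u⟫ ^ 2 ∂D := integral_nonneg fun _ => sq_nonneg _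
    have hvarW : 0 ≤ ∫ x, ⟪x - μW, u⟫ ^ 2 ∂W := integral_nonneg fun _ => sq_nonneg _
    have hkey : ε * (1 - ε) * ‖Δ‖ ^ 2 ≤ σ ^ 2 + ε * (1 - ε) * ⟪v, Δ⟫ ^ 2 := by
      have := hvmax u hu
      rw [hQ, hQ, huΔ, real_inner_comm] at this
      nlinarith [hDcov v hv, hWcov v hv]
    have h1ε : 0 < 1 - ε := by linarith
    rw [← mul_le_mul_iff_of_pos_left (mul_pos hε0 h1ε)]
    calc ε * (1 - ε) * ((1 - 1 / (6 * (1 - ε))) * ‖Δ‖ ^ 2)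
        = ε * (1 - ε) * ‖Δ‖ ^ 2 - ε / 6 * ‖Δ‖ ^ 2 := by field_simp
      _ ≤ ε * (1 - ε) * ⟪v, Δ⟫ ^ 2 := by linarith
  refine ⟨hcaptured, mul_le_mul_of_nonneg_right ?_ (sq_nonneg _)⟩
  rw [le_sub_comm, div_le_iff₀ (by linarith)]
  linarith

/-- Final chain of inequalities in the proof of Lemma 3: if `σ² ≤ (ε/6)‖Δ‖²`, then the top
eigenvector `v` satisfies `⟨v,Δ⟩² ≥ (1 − 1/(6(1−ε)))‖Δ‖² ≥ (2/3)‖Δ‖²`. -/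
theorem top_eigenvector_captures_delta {d : ℕ} (ε σ : ℝ)
    (hε0 : 0 < ε) (hε1 : ε ≤ 1 / 2) (hσ : 0 ≤ σ)
    (D W : Measure (EuclideanSpace ℝ (Fin d)))
    [IsProbabilityMeasure D] [IsProbabilityMeasure W]
    (hD2 : MemLp (id : EuclideanSpace ℝ (Fin d) → EuclideanSpace ℝ (Fin d)) 2 D)
    (hW2 : MemLp (id : EuclideanSpace ℝ (Fin d) → EuclideanSpace ℝ (Fin d)) 2 W)
    (μD μW : EuclideanSpace ℝ (Fin d))
    (hμD : μD = (∫ x, x ∂D)) (hμW : μW = (∫ x, x ∂W))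
    (hDcov : ∀ u : EuclideanSpace ℝ (Fin d), ‖u‖ = 1 →
      ∫ x, ⟪x - μD, u⟫ ^ 2 ∂D ≤ σ ^ 2)
    (hWcov : ∀ u : EuclideanSpace ℝ (Fin d), ‖u‖ = 1 →
      ∫ x, ⟪x - μW, u⟫ ^ 2 ∂W ≤ σ ^ 2)
    (Δ : EuclideanSpace ℝ (Fin d)) (hΔ : Δ = μD - μW)
    (F : Measure (EuclideanSpace ℝ (Fin d)))
    (hF : F = ENNReal.ofReal (1 - ε) • D + ENNReal.ofReal ε • W)
    (μF : EuclideanSpace ℝ (Fin d)) (hμF : μF = (1 - ε) • μD + ε • μW)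
    (SigmaF : Matrix (Fin d) (Fin d) ℝ)
    (hSigmaF : SigmaF = Matrix.of fun i j => ∫ x, (x i - μF i) * (x j - μF j) ∂F)
    (v : EuclideanSpace ℝ (Fin d)) (hv : ‖v‖ = 1)
    (hvmax : ∀ u : EuclideanSpace ℝ (Fin d), ‖u‖ = 1 →
      ∑ i, ∑ j, u i * SigmaF i j * u j ≤ ∑ i, ∑ j, v i * SigmaF i j * v j)
    (hsep : σ ^ 2 ≤ ε / 6 * ‖Δ‖ ^ 2) :
    (1 - 1 / (6 * (1 - ε))) * ‖Δ‖ ^ 2 ≤ ⟪v, Δ⟫ ^ 2 ∧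
    2 / 3 * ‖Δ‖ ^ 2 ≤ (1 - 1 / (6 * (1 - ε))) * ‖Δ‖ ^ 2 :=
  top_eigenvector_captures_delta_general ε σ hε0 hε1 D W hD2 hW2 μD μW hμD hμW hDcov hWcov Δ hΔ F hF
    μF hμF SigmaF hSigmaF v hv hvmax hsep
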